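/- For ξ ∈ ℝ set c(ξ) := 1/(2 − ξ² − 3iξ) (note 2 − ξ² − 3iξ ≠ 0 for all real ξ), and define the Jost solutions f₊(x,ξ) := c(ξ)·(D₂*(D₁*(e_ξ)))(x) with e_ξ(x) = e^{ixξ}, and f₋(x,ξ) := c(ξ)·(D₂*(D₁*(e_{-ξ})))(x). Then for every ξ ∈ ℝ: (i) for all x ∈ ℝ, −∂ₓ²f₊(x,ξ) − 6 sech²(x) f₊(x,ξ) = ξ² f₊(x,ξ) and −∂ₓ²f₋(x,ξ) − 6 sech²(x) f₋(x,ξ) = ξ² f₋(x,ξ); (ii) e^{-ixξ} f₊(x,ξ) → 1 as x → +∞ and e^{ixξ} f₋(x,ξ) → 1 as x → −∞. -/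

import Mathlib

noncomputable section

/-- `sech x = 1 / cosh x`. -/
def sech (x : ℝ) : ℝ := 1 / Real.cosh x

/-- `D₁* f = −f' + tanh · f`. -/
def D1s (f : ℝ → ℂ) (x : ℝ) : ℂ := -(deriv f x) + (Real.tanh x : ℂ) * f x

/-- `D₂* f = −f' + 2 tanh · f`. -/
def D2s (f : ℝ → ℂ) (x : ℝ) : ℂ := -(deriv f x) + 2 * (Real.tanh x : ℂ) * f x

/-- `c(ξ) = 1/(2 − ξ² − 3iξ)`. -/
def cJost (ξ : ℝ) : ℂ := (2 - (ξ : ℂ) ^ 2 - 3 * Complex.I * (ξ : ℂ))⁻¹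

/-- The plane wave `e_ξ(x) = e^{ixξ}`. -/
def eexp (ξ : ℝ) : ℝ → ℂ := fun x => Complex.exp (Complex.I * (x : ℂ) * (ξ : ℂ))

/-- The Jost solution `f₊(·,ξ) = c(ξ) D₂*(D₁*(e^{i·ξ}))`. -/
def fplus (ξ : ℝ) : ℝ → ℂ := fun x => cJost ξ * D2s (D1s (eexp ξ)) x

/-- The Jost solution `f₋(·,ξ) = c(ξ) D₂*(D₁*(e^{-i·ξ}))`. -/
def fminus (ξ : ℝ) : ℝ → ℂ := fun x => cJost ξ * D2s (D1s (eexp (-ξ))) x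

/-!
Put `a = iη` and `t = tanh x`. Then `D₂* D₁* e_η = e_η · P_a(tanh x)` with the quadratic
`P_a(t) = a² − 1 − 3at + 3t²`. Since `tanh' = 1 − tanh²`, the derivative of `e^{ax} p(tanh x)` is
`e^{ax} q(tanh x)` with `q = a p + p' (1 − t²)`, so the eigenvalue equation
`−u'' − 6 (1 − tanh²) u = η² u` becomes a polynomial identity for `P_a`. As `x → ±∞`,
`tanh x → ±1`, and `c(ξ)` is exactly `1 / P_{iξ}(1) = 1 / P_{−iξ}(−1)`.
-/

open Filter Topology Polynomial Complex

namespace Real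

theorem hasDerivAt_tanh (x : ℝ) : HasDerivAt tanh (1 - tanh x ^ 2) x := by
  have hcosh : cosh x ≠ 0 := (cosh_pos x).ne'
  have h := (hasDerivAt_sinh x).div (hasDerivAt_cosh x) hcosh
  rw [show sinh / cosh = tanh from funext fun y => (tanh_eq_sinh_div_cosh y).symm] at h
  refine h.congr_deriv ?_
  rw [tanh_eq_sinh_div_cosh]
  field_simp

theorem tanh_eq_one_sub (x : ℝ) : tanh x = 1 - 2 / (exp (2 * x) + 1) := by
  have hx : exp (2 * x) = exp x ^ 2 := by rw [← exp_nat_mul]; ring_nf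
  rw [tanh_eq_sinh_div_cosh, sinh_eq, cosh_eq, exp_neg, hx]
  have : exp x ≠ 0 := (exp_pos x).ne'
  field_simp
  ring

theorem tendsto_tanh_atTop : Tendsto tanh atTop (𝓝 1) := by
  have h : Tendsto (fun x => 2 / (exp (2 * x) + 1)) atTop (𝓝 0) :=
    tendsto_const_nhds.div_atTop <| tendsto_atTop_add_const_right _ _ <|
      tendsto_exp_atTop.comp <| tendsto_id.const_mul_atTop two_pos
  simpa [← tanh_eq_one_sub] using h.const_sub 1

theorem tendsto_tanh_atBot : Tendsto tanh atBot (𝓝 (-1)) := by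
  simpa [Function.comp_def] using (tendsto_tanh_atTop.comp tendsto_neg_atBot_atTop).neg

end Real

theorem sech_sq (x : ℝ) : sech x ^ 2 = 1 - Real.tanh x ^ 2 := by
  have hcosh : Real.cosh x ≠ 0 := (Real.cosh_pos x).ne'
  rw [sech, Real.tanh_eq_sinh_div_cosh]
  field_simp
  linear_combination (Real.cosh_sq_sub_sinh_sq x).symm

def twistedDeriv (a : ℂ) (p : ℂ[X]) : ℂ[X] := C a * p + derivative p * (1 - X ^ 2)

def jostPoly (a : ℂ) : ℂ[X] := C (a ^ 2 - 1) - C (3 * a) * X + 3 * X ^ 2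

theorem eval_jostPoly (a t : ℂ) : (jostPoly a).eval t = a ^ 2 - 1 - 3 * a * t + 3 * t ^ 2 := by
  simp [jostPoly]

theorem eval_twistedDeriv (a t : ℂ) (p : ℂ[X]) :
    (twistedDeriv a p).eval t = a * p.eval t + (derivative p).eval t * (1 - t ^ 2) := by
  simp [twistedDeriv]

theorem twistedDeriv_twistedDeriv_jostPoly (a : ℂ) :
    twistedDeriv a (twistedDeriv a (jostPoly a)) + 6 * (1 - X ^ 2) * jostPoly a =
      C (a ^ 2) * jostPoly a := by
  refine Polynomial.funext fun t => ?_
  simp only [twistedDeriv, jostPoly, derivative_add, derivative_sub, derivative_mul, derivative_C,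
    derivative_X, derivative_ofNat, derivative_X_pow_succ, derivative_one, derivative_zero, eval_add,
    eval_sub, eval_mul, eval_C, eval_X, eval_pow, eval_ofNat, eval_one, eval_zero, Nat.cast_one,
    pow_one]
  ring

theorem hasDerivAt_eexp (η x : ℝ) : HasDerivAt (eexp η) (I * η * eexp η x) x := by
  have h : HasDerivAt (fun z : ℂ => I * z * η) (I * η) x := by
    simpa using ((hasDerivAt_id (x : ℂ)).const_mul I).mul_const (η : ℂ)
  exact h.comp_ofReal.cexp.congr_deriv (mul_comm _ _)

theorem hasDerivAt_eexp_mul_eval_tanh (η : ℝ) (p : ℂ[X]) (x : ℝ) :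
    HasDerivAt (fun y => eexp η y * p.eval (Real.tanh y : ℂ))
      (eexp η x * (twistedDeriv (I * η) p).eval (Real.tanh x : ℂ)) x := by
  have hp := (p.hasDerivAt _).comp x (Real.hasDerivAt_tanh x).ofReal_comp
  refine ((hasDerivAt_eexp η x).mul hp).congr_deriv ?_
  simp only [Function.comp_def, eval_twistedDeriv, ofReal_sub, ofReal_one, ofReal_pow]
  ring

theorem deriv_eexp_mul_eval_tanh (η : ℝ) (p : ℂ[X]) :
    deriv (fun y => eexp η y * p.eval (Real.tanh y : ℂ)) =
      fun x => eexp η x * (twistedDeriv (I * η) p).eval (Real.tanh x : ℂ) :=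
  funext fun x => (hasDerivAt_eexp_mul_eval_tanh η p x).deriv

theorem D2s_D1s_eexp (η : ℝ) :
    D2s (D1s (eexp η)) = fun x => eexp η x * (jostPoly (I * η)).eval (Real.tanh x : ℂ) := by
  have h1 : D1s (eexp η) = fun x => eexp η x * (X - C (I * η)).eval (Real.tanh x : ℂ) := by
    funext x
    simp only [D1s, (hasDerivAt_eexp η x).deriv, eval_sub, eval_X, eval_C]
    ring
  funext x
  rw [D2s, h1, deriv_eexp_mul_eval_tanh]
  simp only [eval_twistedDeriv, eval_jostPoly, derivative_sub, derivative_X, derivative_C, eval_sub,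
    eval_X, eval_C, eval_one, eval_zero]
  ring

theorem schrodinger_const_mul_D2s_D1s_eexp (η : ℝ) (k : ℂ) (x : ℝ) :
    -(deriv (deriv (fun y => k * D2s (D1s (eexp η)) y)) x)
        - 6 * (sech x : ℂ) ^ 2 * (k * D2s (D1s (eexp η)) x)
      = (η : ℂ) ^ 2 * (k * D2s (D1s (eexp η)) x) := by
  have hsech : (sech x : ℂ) ^ 2 = 1 - (Real.tanh x : ℂ) ^ 2 := by exact_mod_cast sech_sq x
  have key := congrArg (eval (Real.tanh x : ℂ)) (twistedDeriv_twistedDeriv_jostPoly (I * η))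
  simp only [eval_add, eval_mul, eval_C, eval_sub, eval_one, eval_pow, eval_X, eval_ofNat] at key
  simp only [D2s_D1s_eexp, deriv_const_mul_field', deriv_eexp_mul_eval_tanh, hsech]
  linear_combination (-k * eexp η x) * key +
    (-k * eexp η x * η ^ 2 * (jostPoly (I * η)).eval (Real.tanh x : ℂ)) * I_sq

theorem tendsto_exp_mul_D2s_D1s_eexp (η : ℝ) {l : Filter ℝ} {t : ℝ}
    (h : Tendsto Real.tanh l (𝓝 t)) :
    Tendsto (fun x : ℝ => exp (-(I * x * η)) * D2s (D1s (eexp η)) x) l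
      (𝓝 ((jostPoly (I * η)).eval (t : ℂ))) := by
  have hcancel (x : ℝ) : exp (-(I * x * η)) * eexp η x = 1 := by
    rw [eexp, ← exp_add, neg_add_cancel, exp_zero]
  refine ((jostPoly (I * η)).continuous.tendsto _ |>.comp
    (continuous_ofReal.tendsto _ |>.comp h)).congr fun x => ?_
  simp only [D2s_D1s_eexp, Function.comp_apply, ← mul_assoc, hcancel, one_mul]

theorem two_sub_sq_sub_three_mul_I_ne_zero (ξ : ℝ) :
    (2 - (ξ : ℂ) ^ 2 - 3 * I * (ξ : ℂ)) ≠ 0 := by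
  intro h
  have him : ξ = 0 := by simpa [sq] using congrArg im h
  simpa [him] using congrArg re h

theorem cJost_mul_eval_jostPoly_one (ξ : ℝ) : cJost ξ * (jostPoly (I * ξ)).eval 1 = 1 := by
  rw [eval_jostPoly, cJost]
  convert inv_mul_cancel₀ (two_sub_sq_sub_three_mul_I_ne_zero ξ) using 2
  linear_combination (ξ : ℂ) ^ 2 * I_sq

theorem cJost_mul_eval_jostPoly_neg_one (ξ : ℝ) :
    cJost ξ * (jostPoly (I * (-ξ : ℝ))).eval (-1) = 1 := by
  rw [eval_jostPoly, cJost]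
  convert inv_mul_cancel₀ (two_sub_sq_sub_three_mul_I_ne_zero ξ) using 2
  push_cast
  linear_combination (ξ : ℂ) ^ 2 * I_sq

/-- The Jost solutions of `H = −∂ₓ² − 6 sech²` at energy `ξ²` and their normalizations. -/
theorem jost_solutions :
    (∀ ξ : ℝ, (2 - (ξ : ℂ) ^ 2 - 3 * Complex.I * (ξ : ℂ)) ≠ 0) ∧
      ∀ ξ : ℝ,
        ((∀ x : ℝ,
            -(deriv (deriv (fplus ξ)) x) - 6 * (sech x : ℂ) ^ 2 * fplus ξ x
              = (ξ : ℂ) ^ 2 * fplus ξ x) ∧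
          ∀ x : ℝ,
            -(deriv (deriv (fminus ξ)) x) - 6 * (sech x : ℂ) ^ 2 * fminus ξ x
              = (ξ : ℂ) ^ 2 * fminus ξ x) ∧
        Filter.Tendsto (fun x : ℝ => Complex.exp (-(Complex.I * (x : ℂ) * (ξ : ℂ))) * fplus ξ x)
          Filter.atTop (nhds 1) ∧
        Filter.Tendsto (fun x : ℝ => Complex.exp (Complex.I * (x : ℂ) * (ξ : ℂ)) * fminus ξ x)
          Filter.atBot (nhds 1) := by
  refine ⟨two_sub_sq_sub_three_mul_I_ne_zero, fun ξ => ⟨⟨fun x => ?_, fun x => ?_⟩, ?_, ?_⟩⟩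
  · exact schrodinger_const_mul_D2s_D1s_eexp ξ (cJost ξ) x
  · have h := schrodinger_const_mul_D2s_D1s_eexp (-ξ) (cJost ξ) x
    rwa [ofReal_neg, neg_sq] at h
  · have h := (tendsto_exp_mul_D2s_D1s_eexp ξ Real.tendsto_tanh_atTop).const_mul (cJost ξ)
    rw [ofReal_one, cJost_mul_eval_jostPoly_one] at h
    exact h.congr fun x => mul_left_comm _ _ _
  · have h := (tendsto_exp_mul_D2s_D1s_eexp (-ξ) Real.tendsto_tanh_atBot).const_mul (cJost ξ)
    rw [ofReal_neg (1 : ℝ), ofReal_one, cJost_mul_eval_jostPoly_neg_one] at h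
    refine h.congr fun x => ?_
    simp only [fminus, ofReal_neg, mul_neg, neg_neg]
    ring
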